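/- Let F be a free group of finite rank, let H be a finitely generated subgroup of F, let u ∈ F, and let k ≥ 1. If the set of elements of F of relative order k in the coset Hu is nonempty, then there exist finitely many elements w₁, …, w_t ∈ F, each of relative order k in Hu, such that this set equals the union over i = 1, …, t of the (H ∩ u⁻¹Hu)-conjugates of the cosets (H ∩ H^{w_i} ∩ H^{w_i²} ∩ ⋯ ∩ H^{w_i^{k-1}}) w_i, where H^w = w⁻¹Hw. -/

import Mathlib

/-- The relative order of `g` in the subgroup `H`: the least `k ≥ 1` with `g ^ k ∈ H`,
and `0` if no such `k` exists. -/
noncomputable def relOrd {G : Type*} [Group G] (H : Subgroup G) (g : G) : ℕ :=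
  sInf {k : ℕ | 1 ≤ k ∧ g ^ k ∈ H}

/-- The relative order of `g` in the coset `Hu`: the least `k ≥ 1` with `g ^ k ∈ Hu`,
and `0` if no such `k` exists. -/
noncomputable def relOrdCoset {G : Type*} [Group G] (H : Subgroup G) (u g : G) : ℕ :=
  sInf {k : ℕ | 1 ≤ k ∧ g ^ k * u⁻¹ ∈ H}

/-!
Write `g = C R C⁻¹` with `R` cyclically reduced. For `j ≤ k` the reduced word of `g ^ j * C` is
`C R^j`, a prefix of the reduced word of `g ^ k ∈ H u`. Since a product of two reduced words only
cancels at the junction, every prefix of the reduced word of an element of `H u` lies in `H W`,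
where `W` is the finite set of prefixes of `u`, of the generators of `H` and of their inverses.
So each `g` of relative order `k` has a profile `(w₀, …, w_k) ∈ W^{k+1}`, with `g ^ j * a ∈ H w_j`
for some `a`. If `g'` has the same profile, with `a'`, then `c = a' a⁻¹` satisfies
`g' ^ j * c * g ^ (-j) ∈ H` for all `j ≤ k`, which is exactly what it means for `g` to be a
`(H ∩ H^u)`-conjugate of an element of `(H ∩ H^{g'} ∩ ⋯ ∩ H^{g'^(k-1)}) g'`. There are finitely
many profiles.
-/

open Pointwise

theorem List.prefix_or_exists_of_prefix_append {α : Type*} {l₁ l₂ l₃ : List α}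
    (h : l₁ <+: l₂ ++ l₃) : l₁ <+: l₂ ∨ ∃ l, l <+: l₃ ∧ l₁ = l₂ ++ l := by
  obtain ⟨t, ht⟩ := h
  rcases List.append_eq_append_iff.1 ht with ⟨a, h₂, -⟩ | ⟨c, h₁, h₃⟩
  · exact .inl ⟨a, h₂.symm⟩
  · exact .inr ⟨c, ⟨t, h₃.symm⟩, h₁⟩

namespace FreeGroup

variable {α : Type*} [DecidableEq α]

theorem IsReduced.exists_reduce_append_eq {L₁ L₂ : List (α × Bool)} (h₁ : IsReduced L₁)
    (h₂ : IsReduced L₂) :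
    ∃ P D S, L₁ = P ++ D ∧ L₂ = invRev D ++ S ∧ reduce (L₁ ++ L₂) = P ++ S := by
  induction L₂ generalizing L₁ with
  | nil => exact ⟨L₁, [], [], by simp, by simp [invRev], by simpa using h₁.reduce_eq⟩
  | cons y L₂ ih =>
    rcases L₁.eq_nil_or_concat' with rfl | ⟨P', x, rfl⟩
    · exact ⟨[], [], y :: L₂, rfl, by simp [invRev], h₂.reduce_eq⟩
    by_cases hxy : x.1 = y.1 ∧ y.2 = !x.2
    · obtain ⟨P, D, S, rfl, rfl, hred⟩ :=
        ih (L₁ := P') (h₁.infix ⟨[], [x], by simp⟩) (h₂.infix ⟨[y], [], by simp⟩)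
      obtain rfl : y = (x.1, !x.2) := Prod.ext hxy.1.symm hxy.2
      refine ⟨P, D ++ [x], S, by simp, by simp [invRev], ?_⟩
      have hstep : Red.Step (P ++ D ++ [x] ++ (x.1, !x.2) :: (invRev D ++ S))
          (P ++ D ++ (invRev D ++ S)) := by
        simpa using Red.Step.not (L₁ := P ++ D) (L₂ := invRev D ++ S) (x := x.1) (b := x.2)
      rw [← hred, reduce.Step.eq hstep]
    · refine ⟨P' ++ [x], [], y :: L₂, by simp, by simp [invRev], IsReduced.reduce_eq ?_⟩
      refine List.isChain_append.2 ⟨h₁, h₂, fun a ha b hb => ?_⟩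
      simp only [List.getLast?_concat, List.head?_cons, Option.mem_def, Option.some.injEq]
        at ha hb
      subst ha hb
      grind

theorem exists_toWord_mul_eq (x y : FreeGroup α) :
    ∃ P D S, x.toWord = P ++ D ∧ y.toWord = invRev D ++ S ∧ (x * y).toWord = P ++ S := by
  rw [toWord_mul]
  exact isReduced_toWord.exists_reduce_append_eq isReduced_toWord

def prefixes (x : FreeGroup α) : Set (FreeGroup α) := {z | z.toWord <+: x.toWord}

theorem mem_prefixes {x z : FreeGroup α} : z ∈ prefixes x ↔ z.toWord <+: x.toWord := Iff.rfl

theorem prefixes_finite (x : FreeGroup α) : (prefixes x).Finite :=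
  (x.toWord.inits.finite_toSet.preimage toWord_injective.injOn).subset
    fun _ hz => (List.mem_inits _ _).2 hz

theorem one_mem_prefixes (x : FreeGroup α) : 1 ∈ prefixes x := by
  simp [mem_prefixes, toWord_one]

theorem prefixes_one : prefixes (1 : FreeGroup α) = {1} := by
  ext z
  simp [mem_prefixes, toWord_one, toWord_eq_nil_iff]

theorem toWord_mk_of_prefix {L : List (α × Bool)} {x : FreeGroup α} (h : L <+: x.toWord) :
    (mk L).toWord = L := by
  rw [toWord_mk, (isReduced_toWord.infix h.isInfix).reduce_eq]

theorem prefixes_mul_subset (x y : FreeGroup α) :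
    prefixes (x * y) ⊆ prefixes x ∪ x • prefixes y := by
  intro z hz
  obtain ⟨P, D, S, hx, hy, hxy⟩ := exists_toWord_mul_eq x y
  rw [mem_prefixes, hxy] at hz
  rcases List.prefix_or_exists_of_prefix_append hz with hP | ⟨S₀, hS₀, hz⟩
  · exact .inl (mem_prefixes.2 (hx ▸ hP.trans (List.prefix_append P D)))
  · have hpre : invRev D ++ S₀ <+: y.toWord := hy ▸ (List.prefix_append_right_inj _).2 hS₀
    refine .inr ⟨mk (invRev D ++ S₀),
      mem_prefixes.2 ((toWord_mk_of_prefix hpre).symm ▸ hpre), ?_⟩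
    show x * _ = z
    rw [← mk_toWord (x := x), ← mk_toWord (x := z), hx, hz, ← mul_mk, ← mul_mk, ← mul_mk,
      ← inv_mk]
    group

theorem prefixes_subset_mul_of_mem_closure {S W : Set (FreeGroup α)} (hW : 1 ∈ W)
    (hS : ∀ s ∈ S, prefixes s ⊆ W) {x : FreeGroup α} (hx : x ∈ Submonoid.closure S) :
    prefixes x ⊆ (Submonoid.closure S : Set (FreeGroup α)) * W := by
  induction hx using Submonoid.closure_induction with
  | mem s hs => exact (hS s hs).trans (Set.subset_mul_right W (Submonoid.one_mem _))
  | one =>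
    rw [prefixes_one, Set.singleton_subset_iff]
    exact ⟨1, Submonoid.one_mem _, 1, hW, one_mul 1⟩
  | mul x y hx _ ihx ihy =>
    refine (prefixes_mul_subset x y).trans (Set.union_subset ihx ?_)
    rintro _ ⟨z, hz, rfl⟩
    obtain ⟨m, hm, w, hw, rfl⟩ := ihy hz
    exact ⟨x * m, Submonoid.mul_mem _ hx hm, w, hw, mul_assoc x m w⟩

theorem pow_mul_mk_conjugator_mem_prefixes (g : FreeGroup α) {j k : ℕ} (hk : k ≠ 0)
    (hj : j ≤ k) :
    g ^ j * mk (reduceCyclically.conjugator g.toWord) ∈ prefixes (g ^ k) := by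
  set C := reduceCyclically.conjugator g.toWord
  set R := reduceCyclically g.toWord
  have hg : g = mk C * mk R * (mk C)⁻¹ := by
    rw [inv_mk, mul_mk, mul_mk, reduceCyclically.conj_conjugator_reduceCyclically, mk_toWord]
  have hpow : g ^ j * mk C = mk (C ++ (List.replicate j R).flatten) := by
    rw [hg, conj_pow, pow_mk, ← mul_mk, inv_mul_cancel_right]
  have hpre : C ++ (List.replicate j R).flatten <+: (g ^ k).toWord := by
    rw [toWord_pow, reduceCyclically.reduce_flatten_replicate isReduced_toWord, if_neg hk]
    refine ⟨(List.replicate (k - j) R).flatten ++ invRev C, ?_⟩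
    rw [← List.append_assoc, List.append_assoc C, ← List.flatten_append, ← List.replicate_add,
      Nat.add_sub_cancel' hj]
  rw [hpow, mem_prefixes, toWord_mk_of_prefix hpre]
  exact hpre

theorem exists_finite_forall_pow_mul_mem_mul {H : Subgroup (FreeGroup α)} (hH : H.FG)
    (u : FreeGroup α) :
    ∃ W : Set (FreeGroup α), W.Finite ∧ ∀ (g : FreeGroup α) (k : ℕ), k ≠ 0 → g ^ k * u⁻¹ ∈ H →
      ∃ a, ∀ j ≤ k, g ^ j * a ∈ (H : Set (FreeGroup α)) * W := by
  obtain ⟨S, rfl, hS⟩ := (Subgroup.fg_iff H).1 hH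
  set W := ⋃ v ∈ insert u (S ∪ S⁻¹), prefixes v
  have hW : W.Finite := ((hS.union hS.inv).insert u).biUnion fun v _ => prefixes_finite v
  have hsub : ∀ v ∈ insert u (S ∪ S⁻¹), prefixes v ⊆ W := fun v hv =>
    Set.subset_biUnion_of_mem (u := prefixes) hv
  have hclosure :
      ∀ h ∈ Subgroup.closure S, prefixes h ⊆ (Subgroup.closure S : Set _) * W := by
    intro h hh
    rw [← SetLike.mem_coe, ← Subgroup.coe_toSubmonoid, Subgroup.closure_toSubmonoid] at hh
    rw [← Subgroup.coe_toSubmonoid, Subgroup.closure_toSubmonoid]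
    exact prefixes_subset_mul_of_mem_closure (hsub u (Set.mem_insert u _) (one_mem_prefixes u))
      (fun s hs => hsub s (Set.mem_insert_of_mem u hs)) hh
  refine ⟨W, hW, fun g k hk hgk =>
    ⟨mk (reduceCyclically.conjugator g.toWord), fun j hj => ?_⟩⟩
  have hmem := pow_mul_mk_conjugator_mem_prefixes g hk hj
  rw [← inv_mul_cancel_right (g ^ k) u] at hmem
  rcases prefixes_mul_subset _ _ hmem with hmem | ⟨z, hz, hzeq⟩
  · exact hclosure _ hgk hmem
  · exact ⟨_, hgk, z, hsub u (Set.mem_insert u _) hz, hzeq⟩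

end FreeGroup

section RelOrdCoset

variable {G : Type*} [Group G] {H : Subgroup G} {u g w c : G} {k : ℕ}

theorem relOrdCoset_eq_iff (hk : 1 ≤ k) :
    relOrdCoset H u g = k ↔ g ^ k * u⁻¹ ∈ H ∧ ∀ m, 1 ≤ m → m < k → g ^ m * u⁻¹ ∉ H := by
  constructor
  · rintro rfl
    have hne : {m | 1 ≤ m ∧ g ^ m * u⁻¹ ∈ H}.Nonempty := by
      by_contra hempty
      rw [Set.not_nonempty_iff_eq_empty] at hempty
      simp [relOrdCoset, hempty] at hk
    exact ⟨(Nat.sInf_mem hne).2, fun m hm hlt hmem => Nat.notMem_of_lt_sInf hlt ⟨hm, hmem⟩⟩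
  · rintro ⟨hmem, hmin⟩
    exact IsLeast.csInf_eq
      ⟨⟨hk, hmem⟩, fun m ⟨hm, hmem⟩ => not_lt.1 fun hlt => hmin m hm hlt hmem⟩

theorem mul_inv_mem_iff_of_conj_mem {x y : G} (hxy : x * c * y⁻¹ ∈ H) (hc : u * c * u⁻¹ ∈ H) :
    y * u⁻¹ ∈ H ↔ x * u⁻¹ ∈ H := by
  have hx : x * u⁻¹ = x * c * y⁻¹ * (y * u⁻¹) * (u * c * u⁻¹)⁻¹ := by group
  rw [hx, Subgroup.mul_mem_cancel_right H (H.inv_mem hc), Subgroup.mul_mem_cancel_left H hxy]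

theorem relOrdCoset_eq_of_conj_mem (hk : 1 ≤ k) (hc : u * c * u⁻¹ ∈ H)
    (hlink : ∀ j ≤ k, w ^ j * c * (g ^ j)⁻¹ ∈ H) (hw : relOrdCoset H u w = k) :
    relOrdCoset H u g = k := by
  have hiff : ∀ j ≤ k, g ^ j * u⁻¹ ∈ H ↔ w ^ j * u⁻¹ ∈ H := fun j hj =>
    mul_inv_mem_iff_of_conj_mem (hlink j hj) hc
  rw [relOrdCoset_eq_iff hk] at hw ⊢
  exact ⟨(hiff k le_rfl).2 hw.1, fun m hm hlt => (hiff m hlt.le).not.2 (hw.2 m hm hlt)⟩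

theorem mul_pow_mul_inv_pow_mem {y : G} (hy : ∀ j < k, w ^ j * y * (w ^ j)⁻¹ ∈ H) :
    ∀ m ≤ k, (y * w) ^ m * (w ^ m)⁻¹ ∈ H := by
  intro m hm
  induction m with
  | zero => simp
  | succ m ih =>
    have hsucc : (y * w) ^ (m + 1) * (w ^ (m + 1))⁻¹ =
        (y * w) ^ m * (w ^ m)⁻¹ * (w ^ m * y * (w ^ m)⁻¹) := by
      rw [pow_succ, pow_succ]; group
    rw [hsucc]
    exact H.mul_mem (ih (by omega)) (hy m (by omega))

-- The `(H ∩ H^u)`-conjugates of the coset `(H ∩ H^w ∩ ⋯ ∩ H^{w^{k-1}}) w`, where `H^v = v⁻¹ H v`.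
def conjCosetClass (H : Subgroup G) (u w : G) (k : ℕ) : Set G :=
  {g | ∃ y, (∀ j < k, w ^ j * y * (w ^ j)⁻¹ ∈ H) ∧
    ∃ c, (c ∈ H ∧ u * c * u⁻¹ ∈ H) ∧ g = c⁻¹ * (y * w) * c}

theorem exists_conj_mem_of_mem_conjCosetClass (hg : g ∈ conjCosetClass H u w k) :
    ∃ c, u * c * u⁻¹ ∈ H ∧ ∀ j ≤ k, w ^ j * c * (g ^ j)⁻¹ ∈ H := by
  obtain ⟨y, hy, c, ⟨hc, huc⟩, rfl⟩ := hg
  refine ⟨c, huc, fun j hj => ?_⟩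
  have hconj :
      w ^ j * c * ((c⁻¹ * (y * w) * c) ^ j)⁻¹ = ((y * w) ^ j * (w ^ j)⁻¹)⁻¹ * c := by
    rw [show c⁻¹ * (y * w) * c = c⁻¹ * (y * w) * c⁻¹⁻¹ by rw [inv_inv], conj_pow]
    group
  rw [hconj]
  exact H.mul_mem (H.inv_mem (mul_pow_mul_inv_pow_mem hy j hj)) hc

theorem mem_conjCosetClass_of_conj_mem (hw : w ^ k * u⁻¹ ∈ H) (hg : g ^ k * u⁻¹ ∈ H)
    (hlink : ∀ j ≤ k, w ^ j * c * (g ^ j)⁻¹ ∈ H) : g ∈ conjCosetClass H u w k := by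
  refine ⟨c * g * c⁻¹ * w⁻¹, fun j hj => ?_, c, ⟨by simpa using hlink 0 k.zero_le, ?_⟩,
    by group⟩
  · have hconj : w ^ j * (c * g * c⁻¹ * w⁻¹) * (w ^ j)⁻¹ =
        w ^ j * c * (g ^ j)⁻¹ * (w ^ (j + 1) * c * (g ^ (j + 1))⁻¹)⁻¹ := by
      rw [pow_succ, pow_succ]; group
    rw [hconj]
    exact H.mul_mem (hlink j hj.le) (H.inv_mem (hlink (j + 1) hj))
  · have huc :
        u * c * u⁻¹ = (w ^ k * u⁻¹)⁻¹ * (w ^ k * c * (g ^ k)⁻¹) * (g ^ k * u⁻¹) := by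
      group
    rw [huc]
    exact H.mul_mem (H.mul_mem (H.inv_mem hw) (hlink k le_rfl)) hg

theorem exists_setOf_relOrdCoset_eq_iUnion (hk : 1 ≤ k) {W : Set G} (hW : W.Finite)
    (hcover : ∀ g, g ^ k * u⁻¹ ∈ H → ∃ a, ∀ j ≤ k, g ^ j * a ∈ (H : Set G) * W) :
    ∃ (t : ℕ) (w : Fin t → G), (∀ i, relOrdCoset H u (w i) = k) ∧
      {g | relOrdCoset H u g = k} = ⋃ i, conjCosetClass H u (w i) k := by
  set V : Set (Fin (k + 1) → G) := {p | ∀ j, p j ∈ W} ∩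
    {p | ∃ g a, relOrdCoset H u g = k ∧ ∀ j : Fin (k + 1), g ^ (j : ℕ) * a * (p j)⁻¹ ∈ H}
  have hV : V.Finite := (Set.Finite.pi' fun _ => hW).subset Set.inter_subset_left
  obtain ⟨t, e, he⟩ := hV.fin_embedding
  choose w a hw ha using fun i => (he.symm ▸ Set.mem_range_self i : e i ∈ V).2
  refine ⟨t, w, hw, Set.Subset.antisymm (fun g hg => ?_) (Set.iUnion_subset fun i g hg => ?_)⟩
  · have hgk := ((relOrdCoset_eq_iff hk).1 hg).1
    obtain ⟨b, hb⟩ := hcover g hgk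
    have hprofile : ∀ j : Fin (k + 1), ∃ v ∈ W, g ^ (j : ℕ) * b * v⁻¹ ∈ H := fun j => by
      obtain ⟨h, hh, v, hv, hhv⟩ := hb j (Nat.lt_succ_iff.1 j.2)
      exact ⟨v, hv, by rwa [← hhv, mul_inv_cancel_right]⟩
    choose p hpW hp using hprofile
    obtain ⟨i, rfl⟩ : p ∈ Set.range e := he ▸ ⟨hpW, g, b, hg, hp⟩
    refine Set.mem_iUnion.2 ⟨i, mem_conjCosetClass_of_conj_mem (c := a i * b⁻¹)
      ((relOrdCoset_eq_iff hk).1 (hw i)).1 hgk fun j hj => ?_⟩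
    have hj' : j < k + 1 := Nat.lt_succ_of_le hj
    convert H.mul_mem (ha i ⟨j, hj'⟩) (H.inv_mem (hp ⟨j, hj'⟩)) using 1
    group
  · obtain ⟨c, hc, hlink⟩ := exists_conj_mem_of_mem_conjCosetClass hg
    exact relOrdCoset_eq_of_conj_mem hk hc hlink (hw i)

end RelOrdCoset

theorem coset_preorder_description_general (n : ℕ) (H : Subgroup (FreeGroup (Fin n))) (hH : H.FG)
    (u : FreeGroup (Fin n)) (k : ℕ) (hk : 1 ≤ k) :
    ∃ (t : ℕ) (w : Fin t → FreeGroup (Fin n)),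
      (∀ i, relOrdCoset H u (w i) = k) ∧
      {g : FreeGroup (Fin n) | relOrdCoset H u g = k} =
        ⋃ i : Fin t, {g : FreeGroup (Fin n) |
          ∃ y : FreeGroup (Fin n),
            (∀ j : ℕ, j < k → (w i) ^ j * y * ((w i) ^ j)⁻¹ ∈ H) ∧
            ∃ c : FreeGroup (Fin n), (c ∈ H ∧ u * c * u⁻¹ ∈ H) ∧
              g = c⁻¹ * (y * w i) * c} := by
  obtain ⟨W, hW, hcover⟩ := FreeGroup.exists_finite_forall_pow_mul_mem_mul hH u
  exact exists_setOf_relOrdCoset_eq_iUnion hk hW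
    fun g => hcover g k (Nat.one_le_iff_ne_zero.1 hk)

/-- Description of the set of elements of relative order `k ≥ 1` in a coset `Hu` of a finitely
generated subgroup `H` of a free group of finite rank: if nonempty, it is the union, over finitely
many elements `w₁, …, w_t` of relative order `k` in `Hu`, of the `(H ∩ H^u)`-conjugates of the
cosets `(H ∩ H^{wᵢ} ∩ ⋯ ∩ H^{wᵢ^{k-1}}) wᵢ`. -/
theorem coset_preorder_description (n : ℕ) (H : Subgroup (FreeGroup (Fin n))) (hH : H.FG)
    (u : FreeGroup (Fin n)) (k : ℕ) (hk : 1 ≤ k)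
    (hne : {g : FreeGroup (Fin n) | relOrdCoset H u g = k}.Nonempty) :
    ∃ (t : ℕ) (w : Fin t → FreeGroup (Fin n)),
      (∀ i, relOrdCoset H u (w i) = k) ∧
      {g : FreeGroup (Fin n) | relOrdCoset H u g = k} =
        ⋃ i : Fin t, {g : FreeGroup (Fin n) |
          ∃ y : FreeGroup (Fin n),
            (∀ j : ℕ, j < k → (w i) ^ j * y * ((w i) ^ j)⁻¹ ∈ H) ∧
            ∃ c : FreeGroup (Fin n), (c ∈ H ∧ u * c * u⁻¹ ∈ H) ∧
              g = c⁻¹ * (y * w i) * c} :=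
  coset_preorder_description_general n H hH u k hk
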